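/- Let p be an odd prime, 0 ≤ i ≤ (p-3)/2 and (p-1)/2 ≤ l ≤ p. Then v_{lp + (p+3)/2 + i} ≡ 0 (mod p). -/

import Mathlib

open Polynomial Finset

noncomputable def v (n : ℕ) : ℤ :=
  if n = 0 then -1 else
  ((1 - X) * ∏ j ∈ Finset.range (2 * n - 2),
      (C ((2 * n : ℤ) - 3 - (j : ℤ)) + C (j : ℤ) * X)).coeff (n - 1)

/-!
Modulo `p` the factor `(2n - 3 - j) + jX` of `v n` is `c + j (X - 1)` with `c = 2n - 3`, so it
depends only on `j mod p`, and over `𝔽_p` one full period multiplies to `c B` with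
`B = 1 - (X - 1) ^ (p - 1)` (a polynomial form of Wilson's theorem). For
`n = l p + (p + 3) / 2 + i` there are `2l + 1` full periods and `2i + 1` leftover factors, whose
product `T` has degree at most `2i`; hence
`v n ≡ c ^ (2l + 1) [X ^ (n - 1)] (1 - X) B ^ (2l + 1) T`.

Since `(1 - X) B = X ^ p - X ≡ 1 - X` modulo `X ^ p - 1` and `B ^ p (X ^ p - 1)` is a multiple of
`X ^ (p (p - 1)) - 1`, that polynomial is congruent modulo `X ^ (p (p - 1)) - 1` to
`B ^ p (1 - X) T`: a polynomial in `X ^ p` times one of degree below `(n - 1) mod p`, so it has no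
monomial with exponent `≡ n - 1 (mod p)`. Reduction modulo `X ^ N - 1` preserves the coefficient
sums over residue classes of exponents mod `N`; by the degree bound and
`X ^ (2l + 1) ∣ (1 - X) B ^ (2l + 1) T`, the exponent `n - 1` is the only one in its class
mod `p (p - 1)` that can carry a coefficient, which therefore vanishes.
-/

namespace FiniteField

variable {K : Type*} [Field K] [Fintype K]

theorem prod_univ_X_sub_C : ∏ z : K, (X - C z) = X ^ Fintype.card K - X := by
  have hmonic : (X ^ Fintype.card K - X : K[X]).Monic :=
    monic_X_pow_sub (by simpa using Fintype.one_lt_card (α := K))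
  have hcard : Multiset.card (X ^ Fintype.card K - X : K[X]).roots =
      (X ^ Fintype.card K - X : K[X]).natDegree := by
    rw [roots_X_pow_card_sub_X, X_pow_card_sub_X_natDegree_eq K Fintype.one_lt_card]
    rfl
  have := prod_multiset_X_sub_C_of_monic_of_roots_card_eq hmonic hcard
  rwa [roots_X_pow_card_sub_X] at this

theorem prod_erase_zero_X_sub_C [DecidableEq K] :
    ∏ z ∈ univ.erase (0 : K), (X - C z) = X ^ (Fintype.card K - 1) - 1 := by
  apply mul_left_cancel₀ (X_ne_zero : (X : K[X]) ≠ 0)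
  have h := prod_univ_X_sub_C (K := K)
  rw [← mul_prod_erase univ _ (mem_univ 0), C_0, sub_zero] at h
  rw [h, mul_sub, mul_one, ← pow_succ', Nat.sub_add_cancel Fintype.card_pos]

theorem prod_univ_one_add_C_mul_X :
    ∏ z : K, (1 + C z * X) = 1 - X ^ (Fintype.card K - 1) := by
  classical
  have hfactor : ∀ z ∈ univ.erase (0 : K), 1 + C z * X = C z * (X - C (-z⁻¹)) := by
    intro z hz
    rw [mul_sub, ← C_mul, mul_neg, mul_inv_cancel₀ (ne_of_mem_erase hz), C_neg, C_1]
    ring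
  have hreindex :
      ∏ z ∈ univ.erase (0 : K), (X - C (-z⁻¹)) = X ^ (Fintype.card K - 1) - 1 := by
    rw [← prod_erase_zero_X_sub_C]
    refine prod_nbij' (fun z => -z⁻¹) (fun z => -z⁻¹) ?_ ?_ ?_ ?_ ?_ <;> simp
  have h : ∏ z : K, (1 + C z * X) =
      C (∏ z ∈ univ.erase 0, z) * (X ^ (Fintype.card K - 1) - 1) := by
    rw [← mul_prod_erase univ _ (mem_univ 0), prod_congr rfl hfactor, prod_mul_distrib, hreindex,
      map_prod]
    simp
  -- evaluating at `0` gives Wilson's theorem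
  have hwilson : ∏ z ∈ univ.erase (0 : K), z = -1 := by
    have hq : Fintype.card K - 1 ≠ 0 := by have := Fintype.one_lt_card (α := K); omega
    have h0 : (1 : K) = -∏ z ∈ univ.erase 0, z := by
      simpa [eval_prod, hq] using congrArg (eval 0) h
    linear_combination h0
  rw [h, hwilson]
  simp

theorem prod_univ_C_add_C_mul (a : K) (Y : K[X]) :
    ∏ z : K, (C a + C z * Y) = C a * (1 - Y ^ (Fintype.card K - 1)) := by
  rcases eq_or_ne a 0 with rfl | ha
  · simp [prod_eq_zero (mem_univ (0 : K))]
  calc ∏ z : K, (C a + C z * Y) = ∏ z : K, (C a + C (a * z) * Y) :=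
        (Equiv.prod_comp (Equiv.mulLeft₀ a ha) fun z => C a + C z * Y).symm
    _ = C a ^ Fintype.card K * ∏ z : K, (1 + C z * Y) := by
        rw [← card_univ, ← prod_const, ← prod_mul_distrib]
        simp only [C_mul, mul_add, mul_one, mul_assoc]
    _ = C a * (1 - Y ^ (Fintype.card K - 1)) := by
        have := congrArg (aeval Y) (prod_univ_one_add_C_mul_X (K := K))
        simp only [map_prod, map_add, map_one, map_mul, aeval_C, aeval_X, map_sub, map_pow,
          algebraMap_eq] at this
        rw [← map_pow, pow_card, this]

end FiniteField

namespace Polynomial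

section Semiring

variable {R : Type*} [Semiring R]

/-- Reduction modulo `X ^ N - 1`, realised in the group algebra of `ZMod N`. -/
noncomputable def foldMod (N : ℕ) : R[X] →+* AddMonoidAlgebra R (ZMod N) :=
  (AddMonoidAlgebra.mapDomainRingHom R (Nat.castAddMonoidHom (ZMod N))).comp
    (toFinsuppIso R).toRingHom

theorem coeff_foldMod (N : ℕ) (F : R[X]) (E : ℕ) :
    (foldMod N F).coeff E = ∑ m ∈ F.support with m ≡ E [MOD N], F.coeff m := by
  classical
  have := Finsupp.mapDomain_apply_eq_sum (Nat.cast : ℕ → ZMod N) F.toFinsupp.coeff (a := E)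
  simp only [ZMod.natCast_eq_natCast_iff] at this
  exact this

end Semiring

section Ring

variable {R : Type*} [Ring R]

theorem foldMod_X_pow_sub_one (N : ℕ) : foldMod N (X ^ N - 1 : R[X]) = 0 := by
  have hX : foldMod N (X : R[X]) = AddMonoidAlgebra.single 1 1 := by
    simp [foldMod, toFinsupp_X]
  rw [map_sub, map_pow, hX, AddMonoidAlgebra.single_pow, one_pow, nsmul_one, ZMod.natCast_self,
    map_one, sub_eq_zero]
  rfl

theorem natDegree_one_sub_X_le : (1 - X : R[X]).natDegree ≤ 1 :=
  (natDegree_sub_le _ _).trans (max_le (by simp) natDegree_X_le)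

theorem coeff_eq_zero_of_X_pow_sub_one_dvd_sub {F G : R[X]} {N E : ℕ} (hdvd : X ^ N - 1 ∣ F - G)
    (hF : ∀ m, m ≡ E [MOD N] → m ≠ E → F.coeff m = 0)
    (hG : ∀ m, m ≡ E [MOD N] → G.coeff m = 0) :
    F.coeff E = 0 := by
  have hfold : foldMod N F = foldMod N G := by
    obtain ⟨H, hH⟩ := hdvd
    rw [← sub_eq_zero, ← map_sub, hH, map_mul, foldMod_X_pow_sub_one, zero_mul]
  have hFE : (foldMod N F).coeff E = F.coeff E := by
    rw [coeff_foldMod]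
    refine sum_eq_single E (fun m hm hmE => hF m (mem_filter.mp hm).2 hmE) fun hE => ?_
    exact notMem_support_iff.mp fun h => hE (mem_filter.mpr ⟨h, Nat.ModEq.refl E⟩)
  have hGE : (foldMod N G).coeff E = 0 := by
    rw [coeff_foldMod]
    exact sum_eq_zero fun m hm => hG m (mem_filter.mp hm).2
  rw [← hFE, hfold, hGE]

end Ring

section CommSemiring

variable {R : Type*} [CommSemiring R]

theorem coeff_expand_mul_eq_zero {p : ℕ} (hp : 0 < p) (f g : R[X]) {m : ℕ}
    (hg : g.natDegree < m % p) : (expand R p f * g).coeff m = 0 := by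
  rw [coeff_mul]
  refine sum_eq_zero fun x hx => ?_
  rw [HasAntidiagonal.mem_antidiagonal] at hx
  rw [coeff_expand hp]
  split_ifs with hdvd
  · have : m % p ≤ x.2 := by
      obtain ⟨k, hk⟩ := hdvd
      rw [← hx, hk, Nat.mul_add_mod]
      exact Nat.mod_le _ _
    rw [coeff_eq_zero_of_natDegree_lt (hg.trans_le this), mul_zero]
  · rw [zero_mul]

theorem natDegree_prod_range_succ_C_add_C_mul_le (a : R) {Y : R[X]} (hY : Y.natDegree ≤ 1)
    (k : ℕ) : (∏ j ∈ range (k + 1), (C a + C (j : R) * Y)).natDegree ≤ k := by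
  rw [prod_range_succ', Nat.cast_zero, C_0, zero_mul, add_zero]
  refine (natDegree_mul_C_le _ _).trans ((natDegree_prod_le _ _).trans ?_)
  refine (sum_le_card_nsmul _ _ 1 fun j _ => ?_).trans (by simp)
  exact natDegree_add_le_of_degree_le (by simp) ((natDegree_C_mul_le _ _).trans hY)

end CommSemiring

end Polynomial

namespace ZMod

variable {M : Type*} [CommMonoid M] {n : ℕ}

theorem prod_range_natCast [NeZero n] (f : ZMod n → M) : ∏ j ∈ range n, f j = ∏ z, f z := by
  refine prod_nbij' (fun j => (j : ZMod n)) (fun z => z.val) ?_ ?_ ?_ ?_ ?_ <;>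
    simp_all [ZMod.val_lt, ZMod.val_natCast, Nat.mod_eq_of_lt]

theorem prod_range_mul_add [NeZero n] (f : ZMod n → M) (q r : ℕ) :
    ∏ j ∈ range (q * n + r), f j = (∏ z, f z) ^ q * ∏ j ∈ range r, f j := by
  induction q with
  | zero => simp
  | succ q ih =>
    rw [show (q + 1) * n + r = n + (q * n + r) by ring, prod_range_add, prod_range_natCast]
    simp only [Nat.cast_add, natCast_self, zero_add]
    rw [ih, pow_succ', mul_assoc]

end ZMod

theorem intCast_v {R : Type*} [CommRing R] {n : ℕ} (hn : n ≠ 0) :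
    (v n : R) = ((1 - X) * ∏ j ∈ range (2 * n - 2),
      (C ((2 * n - 3 : ℤ) : R) + C (j : R) * (X - 1))).coeff (n - 1) := by
  rw [v, if_neg hn, ← eq_intCast (Int.castRingHom R), ← coeff_map]
  simp only [Polynomial.map_mul, Polynomial.map_sub, Polynomial.map_one, Polynomial.map_X,
    Polynomial.map_prod, Polynomial.map_add, Polynomial.map_C]
  congr 2
  refine Finset.prod_congr rfl fun j _ => ?_
  simp only [eq_intCast, Int.cast_sub, Int.cast_natCast, C_sub]
  ring

/-- The product `∏ z ∈ 𝔽_p, (1 + z (X - 1))`, the `B` of the proof sketch. -/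
noncomputable def periodProd (p : ℕ) : (ZMod p)[X] := 1 - (X - 1) ^ (p - 1)

theorem natDegree_periodProd_le (p : ℕ) : (periodProd p).natDegree ≤ p - 1 := by
  have h : ((X - 1 : (ZMod p)[X]) ^ (p - 1)).natDegree ≤ p - 1 := by
    simpa using natDegree_pow_le_of_le (p - 1) (natDegree_X_sub_C_le (1 : ZMod p))
  exact (natDegree_sub_le _ _).trans (max_le (by simp) h)

theorem X_dvd_periodProd {p : ℕ} (hp : Odd p) : X ∣ periodProd p := by
  rw [X_dvd_iff, periodProd, coeff_sub, coeff_one_zero, coeff_zero_eq_eval_zero, eval_pow,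
    eval_sub, eval_X, eval_one, zero_sub, (Nat.Odd.sub_odd hp odd_one).neg_one_pow, sub_self]

section periodProd

variable {p : ℕ} [Fact p.Prime]

theorem prod_univ_C_add_C_mul_X_sub_one (a : ZMod p) :
    ∏ z : ZMod p, (C a + C z * (X - 1)) = C a * periodProd p := by
  rw [FiniteField.prod_univ_C_add_C_mul, ZMod.card, periodProd]

theorem X_sub_one_mul_periodProd : (X - 1) * periodProd p = X - X ^ p := by
  have hp : p - 1 + 1 = p := Nat.sub_add_cancel (Fact.out : p.Prime).one_le
  rw [periodProd, mul_sub, mul_one, ← pow_succ', hp, sub_pow_char, one_pow]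
  ring

theorem one_sub_X_mul_periodProd_sub_one : (1 - X) * (periodProd p - 1) = X ^ p - 1 := by
  linear_combination -X_sub_one_mul_periodProd (p := p)

theorem periodProd_pow_mul_X_pow_sub_one :
    periodProd p ^ p * (X ^ p - 1) = -X ^ p * (X ^ (p * (p - 1)) - 1) := by
  have hpp : p * p = p + p * (p - 1) := by
    rw [add_comm, ← Nat.mul_succ, Nat.succ_eq_add_one,
      Nat.sub_add_cancel (Fact.out : p.Prime).one_le]
  rw [← ZMod.expand_card, show (X ^ p - 1 : (ZMod p)[X]) = expand _ p (X - 1) by simp,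
    ← map_mul, mul_comm, X_sub_one_mul_periodProd]
  simp only [map_sub, expand_X, map_pow]
  rw [← pow_mul, hpp, pow_add]
  ring

theorem X_pow_sub_one_dvd_periodProd_pow_sub_expand {k : ℕ} (hk : p ≤ k) (T : (ZMod p)[X]) :
    X ^ (p * (p - 1)) - 1 ∣
      (1 - X) * periodProd p ^ k * T - expand (ZMod p) p (periodProd p) * ((1 - X) * T) := by
  obtain ⟨σ, rfl⟩ := Nat.exists_eq_add_of_le hk
  have hσ : X ^ p - 1 ∣ (1 - X) * (periodProd p ^ σ - 1) := by
    rw [← one_sub_X_mul_periodProd_sub_one]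
    exact mul_dvd_mul_left _ (by simpa using sub_dvd_pow_sub_pow (periodProd p) 1 σ)
  have hsplit : (1 - X) * periodProd p ^ (p + σ) * T -
      expand (ZMod p) p (periodProd p) * ((1 - X) * T) =
        periodProd p ^ p * ((1 - X) * (periodProd p ^ σ - 1)) * T := by
    rw [ZMod.expand_card, pow_add]
    ring
  rw [hsplit]
  exact dvd_mul_of_dvd_left
    ((Dvd.intro_left _ periodProd_pow_mul_X_pow_sub_one.symm).trans (mul_dvd_mul_left _ hσ)) T

end periodProd

theorem natDegree_one_sub_X_mul_periodProd_pow_mul_le (p k : ℕ) (T : (ZMod p)[X]) :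
    ((1 - X) * periodProd p ^ k * T).natDegree ≤ 1 + k * (p - 1) + T.natDegree := by
  have h : (periodProd p ^ k).natDegree ≤ k * (p - 1) :=
    natDegree_pow_le_of_le _ (natDegree_periodProd_le p)
  exact natDegree_mul_le.trans
    (by gcongr; exact natDegree_mul_le.trans (by gcongr; exact natDegree_one_sub_X_le))

theorem coeff_one_sub_X_mul_periodProd_pow_mul_eq_zero {p : ℕ} [Fact p.Prime] (hodd : Odd p)
    {T : (ZMod p)[X]} {l e : ℕ} (hl : p ≤ 2 * l + 1) (hlp : l ≤ p) (hT : T.natDegree + 1 < e)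
    (he : e < p) : ((1 - X) * periodProd p ^ (2 * l + 1) * T).coeff (l * p + e) = 0 := by
  have hp1 : 1 ≤ p := (Fact.out : p.Prime).one_le
  refine coeff_eq_zero_of_X_pow_sub_one_dvd_sub
    (X_pow_sub_one_dvd_periodProd_pow_sub_expand hl T) (fun m hm hne => ?_) fun m hm => ?_
  · rcases lt_or_gt_of_ne hne with hlt | hgt
    · have hN : p * (p - 1) ≤ l * p + e - m :=
        Nat.le_of_dvd (by omega) ((Nat.modEq_iff_dvd' hlt.le).mp hm)
      have hm : m < 2 * l + 1 := by
        zify [hp1, hlt.le] at hN ⊢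
        nlinarith
      refine X_pow_dvd_iff.mp (dvd_mul_of_dvd_left (dvd_mul_of_dvd_right ?_ _) _) m hm
      exact pow_dvd_pow_of_dvd (X_dvd_periodProd hodd) _
    · have hN : p * (p - 1) ≤ m - (l * p + e) :=
        Nat.le_of_dvd (by omega) ((Nat.modEq_iff_dvd' hgt.le).mp hm.symm)
      refine coeff_eq_zero_of_natDegree_lt
        ((natDegree_one_sub_X_mul_periodProd_pow_mul_le p _ T).trans_lt ?_)
      zify [hp1, hgt.le] at hN ⊢
      nlinarith
  · have hmod : m % p = e := by
      rw [Nat.ModEq.of_mul_right _ hm, add_comm, Nat.add_mul_mod_self_right, Nat.mod_eq_of_lt he]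
    refine coeff_expand_mul_eq_zero hp1 _ _ ?_
    rw [hmod]
    exact natDegree_mul_le.trans_lt (by have := natDegree_one_sub_X_le (R := ZMod p); omega)

theorem v_zero_block (p i l : ℕ) (hp : p.Prime) (hodd : Odd p)
    (hi : i ≤ (p - 3) / 2) (hl1 : (p - 1) / 2 ≤ l) (hl2 : l ≤ p) :
    v (l * p + (p + 3) / 2 + i) ≡ 0 [ZMOD (p : ℤ)] := by
  have : Fact p.Prime := ⟨hp⟩
  obtain ⟨t, ht⟩ := hodd
  set n := l * p + (p + 3) / 2 + i with hn_def
  have hn : n ≠ 0 := by omega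
  have hlen : 2 * n - 2 = (2 * l + 1) * p + (2 * i + 1) := by
    rw [hn_def, ht]; ring_nf; omega
  have hdeg : n - 1 = l * p + (t + 1 + i) := by omega
  rw [Int.modEq_zero_iff_dvd, ← ZMod.intCast_zmod_eq_zero_iff_dvd, intCast_v hn, hlen, hdeg]
  set c : ZMod p := ((2 * n - 3 : ℤ) : ZMod p)
  rw [ZMod.prod_range_mul_add (fun z => C c + C z * (X - 1)), prod_univ_C_add_C_mul_X_sub_one]
  set T := ∏ j ∈ range (2 * i + 1), (C c + C (j : ZMod p) * (X - 1))
  have hT : T.natDegree ≤ 2 * i :=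
    natDegree_prod_range_succ_C_add_C_mul_le c (natDegree_X_sub_C_le 1) (2 * i)
  have hfactor : (1 - X) * ((C c * periodProd p) ^ (2 * l + 1) * T) =
      C (c ^ (2 * l + 1)) * ((1 - X) * periodProd p ^ (2 * l + 1) * T) := by
    rw [mul_pow, C_pow]
    ring
  have hp2 := hp.two_le
  rw [hfactor, coeff_C_mul,
    coeff_one_sub_X_mul_periodProd_pow_mul_eq_zero ⟨t, ht⟩ (by omega) hl2
    (show T.natDegree + 1 < t + 1 + i by omega) (by omega), mul_zero]
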